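/- arXiv:2410.02206 — 2 statements merged into one kernel-verified Lean document; each statement's English description precedes it below -/
import Mathlib

section
/- Let (Ω, Σ, μ) be a measure space, φ : ℝ → ℝ Lipschitz with constant L(φ) and φ(0) = 0, K ∈ L²(Ω⁴) and h ∈ L²(Ω × ℝ, μ ⊗ dt). Define C(u₁, y₁, t₁, t₂) = ∫_{Ω²} φ(h(y₂, t₂)) K(u₁, u₂, y₁, y₂) φ(h(u₂, t₁)) dμ(y₂) dμ(u₂). Then C ∈ L²(Ω² × ℝ²) with ‖C‖_{L²(Ω²×ℝ²)} ≤ L(φ)²·‖h‖²_{L²(Ω×ℝ)}·‖K‖_{L²(Ω⁴)}. -/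
/-!
By Cauchy–Schwarz in the integration variable `u = (u₂, y₂)`, with `g = φ ∘ h` and
`G(t) = ∫ g(x, t)² dμ(x)`,
`|C(u₁, y₁, t₁, t₂)|² ≤ ‖K(u₁, ·, y₁, ·)‖²_{L²(Ω²)} · G(t₁) · G(t₂)`.
Integrating with Tonelli gives `‖C‖² ≤ ‖K‖² (∫ G)² = ‖K‖² ‖g‖⁴`, and `‖g‖ ≤ L ‖h‖` because
`|φ(s)| ≤ L |s|`. Measurability is handled by passing to strongly measurable representatives
of `K` and `g`, which changes `C` only on a null set.
-/

open MeasureTheory ENNReal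

section ProdProdProdComm

variable {α β γ δ : Type*} [MeasurableSpace α] [MeasurableSpace β] [MeasurableSpace γ]
  [MeasurableSpace δ] {μa : Measure α} {μb : Measure β} {μc : Measure γ} {μd : Measure δ}
  [SigmaFinite μa] [SigmaFinite μb] [SigmaFinite μc] [SigmaFinite μd]

theorem measurePreserving_prodProdProdComm :
    MeasurePreserving (fun z : (α × β) × γ × δ => ((z.1.1, z.2.1), (z.1.2, z.2.2)))
      ((μa.prod μb).prod (μc.prod μd)) ((μa.prod μc).prod (μb.prod μd)) := by
  have hmiddle : MeasurePreserving (fun x : β × γ × δ => (x.2.1, (x.1, x.2.2)))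
      (μb.prod (μc.prod μd)) (μc.prod (μb.prod μd)) :=
    (measurePreserving_prodAssoc μc μb μd).comp
      ((Measure.measurePreserving_swap.prod (MeasurePreserving.id μd)).comp
        ((measurePreserving_prodAssoc μb μc μd).symm _))
  exact ((measurePreserving_prodAssoc μa μc (μb.prod μd)).symm _).comp
    (((MeasurePreserving.id μa).prod hmiddle).comp
      (measurePreserving_prodAssoc μa μb (μc.prod μd)))

theorem ae_ae_of_ae_prodProdProdComm {P : (α × β) × γ × δ → Prop}
    (h : ∀ᵐ z ∂(μa.prod μb).prod (μc.prod μd), P z) :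
    ∀ᵐ p ∂μa.prod μc, ∀ᵐ u ∂μb.prod μd, P ((p.1, u.1), (p.2, u.2)) :=
  Measure.ae_ae_of_ae_prod (measurePreserving_prodProdProdComm.quasiMeasurePreserving.ae h)

theorem lintegral_lintegral_prodProdProdComm {f : (α × β) × γ × δ → ℝ≥0∞}
    (hf : Measurable f) :
    ∫⁻ p, ∫⁻ u, f ((p.1, u.1), (p.2, u.2)) ∂μb.prod μd ∂μa.prod μc =
      ∫⁻ z, f z ∂(μa.prod μb).prod (μc.prod μd) := by
  have hswap := measurePreserving_prodProdProdComm (μa := μa) (μb := μc) (μc := μb) (μd := μd)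
  rw [← lintegral_prod (fun z : (α × γ) × β × δ => f ((z.1.1, z.2.1), (z.1.2, z.2.2)))
    (hf.comp hswap.measurable).aemeasurable]
  exact hswap.lintegral_comp hf

end ProdProdProdComm

section LTwo

variable {α : Type*} [MeasurableSpace α] {μ : Measure α}

theorem ENNReal.lintegral_mul_sq_le {f g : α → ℝ≥0∞} (hf : AEMeasurable f μ)
    (hg : AEMeasurable g μ) :
    (∫⁻ x, f x * g x ∂μ) ^ 2 ≤ (∫⁻ x, f x ^ 2 ∂μ) * ∫⁻ x, g x ^ 2 ∂μ := by
  have hHolder := ENNReal.lintegral_mul_le_Lp_mul_Lq μ Real.HolderConjugate.two_two hf hg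
  simp only [Pi.mul_apply, ENNReal.rpow_two] at hHolder
  calc (∫⁻ x, f x * g x ∂μ) ^ 2
      ≤ ((∫⁻ x, f x ^ 2 ∂μ) ^ (1 / 2 : ℝ) * (∫⁻ x, g x ^ 2 ∂μ) ^ (1 / 2 : ℝ)) ^ 2 :=
        pow_le_pow_left' hHolder 2
    _ = (∫⁻ x, f x ^ 2 ∂μ) * ∫⁻ x, g x ^ 2 ∂μ := by
        rw [mul_pow, ← ENNReal.rpow_natCast, ← ENNReal.rpow_natCast, ← ENNReal.rpow_mul,
          ← ENNReal.rpow_mul]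
        norm_num

theorem enorm_integral_mul_sq_le {f g : α → ℝ} (hf : AEMeasurable f μ) (hg : AEMeasurable g μ) :
    ‖∫ x, f x * g x ∂μ‖ₑ ^ 2 ≤ (∫⁻ x, ‖f x‖ₑ ^ 2 ∂μ) * ∫⁻ x, ‖g x‖ₑ ^ 2 ∂μ := by
  calc ‖∫ x, f x * g x ∂μ‖ₑ ^ 2 ≤ (∫⁻ x, ‖f x‖ₑ * ‖g x‖ₑ ∂μ) ^ 2 := by
        simp_rw [← enorm_mul]
        exact pow_le_pow_left' (enorm_integral_le_lintegral_enorm _) 2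
    _ ≤ _ := ENNReal.lintegral_mul_sq_le hf.enorm hg.enorm

theorem eLpNorm_two_sq {E : Type*} [NormedAddCommGroup E] (f : α → E) :
    eLpNorm f 2 μ ^ 2 = ∫⁻ x, ‖f x‖ₑ ^ 2 ∂μ := by
  simpa using eLpNorm_nnreal_pow_eq_lintegral (f := f) (μ := μ) (p := 2) two_ne_zero

end LTwo

section CovarianceKernel

variable {Ω T : Type*} [MeasurableSpace Ω] [MeasurableSpace T] {μ : Measure Ω} {ν : Measure T}
  {K K' : (Ω × Ω) × Ω × Ω → ℝ} {g g' : Ω × T → ℝ}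

/-- The paper's `C` for `g = φ ∘ h`, with `K(u₁, u₂, y₁, y₂)` stored as `K ((u₁, u₂), (y₁, y₂))`
and the integration variable `u = (u₂, y₂)`. -/
noncomputable def covarianceKernel (μ : Measure Ω) (K : (Ω × Ω) × Ω × Ω → ℝ) (g : Ω × T → ℝ) :
    (Ω × Ω) × T × T → ℝ :=
  fun q => ∫ u, g (u.2, q.2.2) * K ((q.1.1, u.1), (q.1.2, u.2)) * g (u.1, q.2.1) ∂μ.prod μ

variable [SigmaFinite μ] [SigmaFinite ν]

theorem MeasureTheory.StronglyMeasurable.covarianceKernel (hK : StronglyMeasurable K)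
    (hg : StronglyMeasurable g) : StronglyMeasurable (covarianceKernel μ K g) := by
  apply StronglyMeasurable.integral_prod_right'
    (f := fun z : ((Ω × Ω) × T × T) × Ω × Ω =>
      g (z.2.2, z.1.2.2) * K ((z.1.1.1, z.2.1), (z.1.1.2, z.2.2)) * g (z.2.1, z.1.2.1))
  refine StronglyMeasurable.mul (StronglyMeasurable.mul ?_ ?_) ?_
  · exact hg.comp_measurable (by fun_prop)
  · exact hK.comp_measurable (by fun_prop)
  · exact hg.comp_measurable (by fun_prop)

theorem covarianceKernel_congr_ae (hK : K =ᵐ[(μ.prod μ).prod (μ.prod μ)] K')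
    (hg : g =ᵐ[μ.prod ν] g') :
    covarianceKernel μ K g =ᵐ[(μ.prod μ).prod (ν.prod ν)] covarianceKernel μ K' g' := by
  have hK_sections : ∀ᵐ p ∂μ.prod μ, ∀ᵐ u ∂μ.prod μ,
      K ((p.1, u.1), (p.2, u.2)) = K' ((p.1, u.1), (p.2, u.2)) :=
    ae_ae_of_ae_prodProdProdComm hK
  have hg_sections : ∀ᵐ t ∂ν, ∀ᵐ x ∂μ, g (x, t) = g' (x, t) :=
    Measure.ae_ae_of_ae_prod (Measure.measurePreserving_swap.quasiMeasurePreserving.ae_eq hg)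
  have h₁ : ∀ᵐ q ∂(μ.prod μ).prod (ν.prod ν), ∀ᵐ x ∂μ, g (x, q.2.1) = g' (x, q.2.1) :=
    (Measure.quasiMeasurePreserving_fst.comp Measure.quasiMeasurePreserving_snd).ae
      hg_sections
  have h₂ : ∀ᵐ q ∂(μ.prod μ).prod (ν.prod ν), ∀ᵐ x ∂μ, g (x, q.2.2) = g' (x, q.2.2) :=
    (Measure.quasiMeasurePreserving_snd.comp Measure.quasiMeasurePreserving_snd).ae
      hg_sections
  filter_upwards [Measure.quasiMeasurePreserving_fst.ae hK_sections, h₁, h₂]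
    with q hKq hg₁ hg₂
  refine integral_congr_ae ?_
  filter_upwards [hKq, Measure.quasiMeasurePreserving_fst.ae hg₁,
    Measure.quasiMeasurePreserving_snd.ae hg₂] with u hKu hu₁ hu₂
  rw [hKu, hu₁, hu₂]

theorem MeasureTheory.AEStronglyMeasurable.covarianceKernel
    (hK : AEStronglyMeasurable K ((μ.prod μ).prod (μ.prod μ)))
    (hg : AEStronglyMeasurable g (μ.prod ν)) :
    AEStronglyMeasurable (covarianceKernel μ K g) ((μ.prod μ).prod (ν.prod ν)) :=
  (hK.stronglyMeasurable_mk.covarianceKernel hg.stronglyMeasurable_mk).aestronglyMeasurable.congr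
    (covarianceKernel_congr_ae hK.ae_eq_mk hg.ae_eq_mk).symm

theorem enorm_covarianceKernel_sq_le (hK : StronglyMeasurable K) (hg : StronglyMeasurable g)
    (q : (Ω × Ω) × T × T) :
    ‖covarianceKernel μ K g q‖ₑ ^ 2 ≤
      (∫⁻ u, ‖K ((q.1.1, u.1), (q.1.2, u.2))‖ₑ ^ 2 ∂μ.prod μ) *
        ((∫⁻ x, ‖g (x, q.2.1)‖ₑ ^ 2 ∂μ) * ∫⁻ x, ‖g (x, q.2.2)‖ₑ ^ 2 ∂μ) := by
  have hK_section : Measurable fun u : Ω × Ω => K ((q.1.1, u.1), (q.1.2, u.2)) :=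
    hK.measurable.comp (by fun_prop)
  have hg_section (t : T) : Measurable fun x : Ω => g (x, t) :=
    hg.measurable.comp (by fun_prop)
  have hrearrange : covarianceKernel μ K g q =
      ∫ u, K ((q.1.1, u.1), (q.1.2, u.2)) * (g (u.1, q.2.1) * g (u.2, q.2.2)) ∂μ.prod μ := by
    unfold covarianceKernel
    congr 1 with u
    ring
  have htensor : ∫⁻ u : Ω × Ω, ‖g (u.1, q.2.1) * g (u.2, q.2.2)‖ₑ ^ 2 ∂μ.prod μ =
      (∫⁻ x, ‖g (x, q.2.1)‖ₑ ^ 2 ∂μ) * ∫⁻ x, ‖g (x, q.2.2)‖ₑ ^ 2 ∂μ := by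
    simp_rw [enorm_mul, mul_pow]
    exact lintegral_prod_mul ((hg_section _).enorm.pow_const 2).aemeasurable
      ((hg_section _).enorm.pow_const 2).aemeasurable
  rw [hrearrange, ← htensor]
  exact enorm_integral_mul_sq_le hK_section.aemeasurable
    (((hg_section _).comp measurable_fst).mul ((hg_section _).comp measurable_snd)).aemeasurable

theorem lintegral_enorm_covarianceKernel_sq_le (hK : StronglyMeasurable K)
    (hg : StronglyMeasurable g) :
    ∫⁻ q, ‖covarianceKernel μ K g q‖ₑ ^ 2 ∂(μ.prod μ).prod (ν.prod ν) ≤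
      (∫⁻ z, ‖K z‖ₑ ^ 2 ∂(μ.prod μ).prod (μ.prod μ)) * (∫⁻ z, ‖g z‖ₑ ^ 2 ∂μ.prod ν) ^ 2 := by
  have hK2 : Measurable fun z => ‖K z‖ₑ ^ 2 := hK.measurable.enorm.pow_const 2
  have hg2 : Measurable fun z => ‖g z‖ₑ ^ 2 := hg.measurable.enorm.pow_const 2
  set A : Ω × Ω → ℝ≥0∞ := fun p => ∫⁻ u, ‖K ((p.1, u.1), (p.2, u.2))‖ₑ ^ 2 ∂μ.prod μ
  set G : T → ℝ≥0∞ := fun t => ∫⁻ x, ‖g (x, t)‖ₑ ^ 2 ∂μ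
  have hA : Measurable A := Measurable.lintegral_prod_right'
    (f := fun z : (Ω × Ω) × Ω × Ω => ‖K ((z.1.1, z.2.1), (z.1.2, z.2.2))‖ₑ ^ 2)
    (hK2.comp (by fun_prop))
  have hG : Measurable G := Measurable.lintegral_prod_left' hg2
  calc ∫⁻ q, ‖covarianceKernel μ K g q‖ₑ ^ 2 ∂(μ.prod μ).prod (ν.prod ν)
      ≤ ∫⁻ q, A q.1 * (G q.2.1 * G q.2.2) ∂(μ.prod μ).prod (ν.prod ν) :=
        lintegral_mono (enorm_covarianceKernel_sq_le hK hg)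
    _ = (∫⁻ p, A p ∂μ.prod μ) * (∫⁻ t, G t ∂ν) ^ 2 := by
        rw [lintegral_prod_mul (g := fun s : T × T => G s.1 * G s.2) hA.aemeasurable
          ((hG.comp measurable_fst).mul (hG.comp measurable_snd)).aemeasurable,
          lintegral_prod_mul hG.aemeasurable hG.aemeasurable, sq]
    _ = _ := by
        rw [lintegral_lintegral_prodProdProdComm hK2, lintegral_prod_symm _ hg2.aemeasurable]

theorem eLpNorm_covarianceKernel_le (hK : AEStronglyMeasurable K ((μ.prod μ).prod (μ.prod μ)))
    (hg : AEStronglyMeasurable g (μ.prod ν)) :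
    eLpNorm (covarianceKernel μ K g) 2 ((μ.prod μ).prod (ν.prod ν)) ≤
      eLpNorm g 2 (μ.prod ν) ^ 2 * eLpNorm K 2 ((μ.prod μ).prod (μ.prod μ)) := by
  rw [eLpNorm_congr_ae (covarianceKernel_congr_ae hK.ae_eq_mk hg.ae_eq_mk),
    eLpNorm_congr_ae hK.ae_eq_mk, eLpNorm_congr_ae hg.ae_eq_mk]
  refine (ENNReal.pow_le_pow_left_iff two_ne_zero).1 ?_
  rw [mul_pow, eLpNorm_two_sq, eLpNorm_two_sq, eLpNorm_two_sq, mul_comm]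
  exact lintegral_enorm_covarianceKernel_sq_le hK.stronglyMeasurable_mk hg.stronglyMeasurable_mk

theorem MeasureTheory.MemLp.covarianceKernel (hK : MemLp K 2 ((μ.prod μ).prod (μ.prod μ)))
    (hg : MemLp g 2 (μ.prod ν)) :
    MemLp (covarianceKernel μ K g) 2 ((μ.prod μ).prod (ν.prod ν)) :=
  ⟨hK.1.covarianceKernel hg.1, (eLpNorm_covarianceKernel_le hK.1 hg.1).trans_lt
    (ENNReal.mul_lt_top (ENNReal.pow_lt_top hg.2) hK.2)⟩

end CovarianceKernel

/-- The covariance kernel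
`C(u₁,y₁,t₁,t₂) = ∫_{Ω²} φ(h(y₂,t₂)) K(u₁,u₂,y₁,y₂) φ(h(u₂,t₁)) dμ(y₂)dμ(u₂)`
belongs to `L²(Ω²×ℝ²)` with `‖C‖ ≤ L(φ)²‖h‖²‖K‖`. -/
theorem covariance_kernel_L2_bound
    {Ω : Type*} [MeasurableSpace Ω] (μ : Measure Ω) [SigmaFinite μ]
    (φ : ℝ → ℝ) (L : NNReal) (hφ : LipschitzWith L φ) (hφ0 : φ 0 = 0)
    (K : Ω → Ω → Ω → Ω → ℝ)
    (hK : MemLp (fun q : (Ω × Ω) × Ω × Ω => K q.1.1 q.1.2 q.2.1 q.2.2) 2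
      ((μ.prod μ).prod (μ.prod μ)))
    (h : Ω × ℝ → ℝ) (hh : MemLp h 2 (μ.prod (volume : Measure ℝ))) :
    MemLp
        (fun q : (Ω × Ω) × ℝ × ℝ =>
          ∫ u : Ω × Ω, φ (h (u.2, q.2.2)) * K q.1.1 u.1 q.1.2 u.2 * φ (h (u.1, q.2.1))
            ∂(μ.prod μ))
        2 ((μ.prod μ).prod ((volume : Measure ℝ).prod (volume : Measure ℝ))) ∧
      eLpNorm
          (fun q : (Ω × Ω) × ℝ × ℝ =>
            ∫ u : Ω × Ω, φ (h (u.2, q.2.2)) * K q.1.1 u.1 q.1.2 u.2 * φ (h (u.1, q.2.1))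
              ∂(μ.prod μ))
          2 ((μ.prod μ).prod ((volume : Measure ℝ).prod (volume : Measure ℝ)))
        ≤ (L : ℝ≥0∞) ^ 2 * (eLpNorm h 2 (μ.prod (volume : Measure ℝ))) ^ 2 *
            eLpNorm (fun q : (Ω × Ω) × Ω × Ω => K q.1.1 q.1.2 q.2.1 q.2.2) 2
              ((μ.prod μ).prod (μ.prod μ)) := by
  have hφh : MemLp (φ ∘ h) 2 (μ.prod volume) := hφ.comp_memLp hφ0 hh
  refine ⟨hK.covarianceKernel hφh, ?_⟩
  calc eLpNorm (covarianceKernel μ _ (φ ∘ h)) 2 ((μ.prod μ).prod (volume.prod volume))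
      ≤ eLpNorm (φ ∘ h) 2 (μ.prod volume) ^ 2 * eLpNorm _ 2 ((μ.prod μ).prod (μ.prod μ)) :=
        eLpNorm_covarianceKernel_le hK.1 hφh.1
    _ ≤ (L * eLpNorm h 2 (μ.prod volume)) ^ 2 * eLpNorm _ 2 ((μ.prod μ).prod (μ.prod μ)) := by
        gcongr
        exact eLpNorm_le_nnreal_smul_eLpNorm_of_ae_le_mul
          (.of_forall (hφ.nnorm_le_mul hφ0 <| h ·)) 2
    _ = _ := by rw [mul_pow]
end

section
/- Under the hypotheses of the previous construction (φ Lipschitz with φ(0)=0, K ∈ L²(Ω⁴), h, h̃ ∈ L²(Ω × ℝ)), the bilinear pairing B(h̃, h̃) = ∫_{ℝ²}∫_{Ω²} h̃(x, t₁) C(x, y, t₁, t₂) h̃(y, t₂) dμ(x) dμ(y) dt₁ dt₂ satisfies the bound |B(h̃, h̃)| ≤ L(φ)²·‖K‖_{L²(Ω⁴)}·‖h‖²_{L²(Ω×ℝ)}·‖h̃‖²_{L²(Ω×ℝ)}. -/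
/-!
Bounding every integrand by its norm reduces the claim to a pairing of nonnegative functions.
By Tonelli it equals `∫ |K((x, u₁), (y, u₂))| F(x, u₁) F(y, u₂)` over `(Ω × Ω) × (Ω × Ω)`, where
`F(x, u) = ∫ |h̃(x, t)| |φ(h(u, t))| dt`, so Cauchy–Schwarz bounds it by `‖K‖₂ ‖F‖₂²`.
Cauchy–Schwarz in `t` followed by Fubini gives `‖F‖₂ ≤ ‖h̃‖₂ ‖φ ∘ h‖₂`, and `|φ r| ≤ L |r|`
because `φ 0 = 0`.
-/

open MeasureTheory ENNReal

section
variable {α : Type*} [MeasurableSpace α] {μ : Measure α}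

lemma sq_eLpNorm_two {ε : Type*} [ENorm ε] (f : α → ε) :
    eLpNorm f 2 μ ^ 2 = ∫⁻ x, ‖f x‖ₑ ^ 2 ∂μ := by
  simpa using eLpNorm_nnreal_pow_eq_lintegral (f := f) (μ := μ) (p := 2) two_ne_zero

lemma lintegral_mul_le_eLpNorm_two_mul_eLpNorm_two {f g : α → ℝ≥0∞} (hf : AEMeasurable f μ)
    (hg : AEMeasurable g μ) :
    ∫⁻ x, f x * g x ∂μ ≤ eLpNorm f 2 μ * eLpNorm g 2 μ := by
  simpa [eLpNorm_eq_lintegral_rpow_enorm_toReal] using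
    ENNReal.lintegral_mul_le_Lp_mul_Lq μ .two_two hf hg

end

section
variable {α β : Type*} [MeasurableSpace α] [MeasurableSpace β] {μ : Measure α} {ν : Measure β}
  [SFinite ν]

lemma eLpNorm_two_prod_mul {f : α → ℝ≥0∞} {g : β → ℝ≥0∞} (hf : AEMeasurable f μ)
    (hg : AEMeasurable g ν) :
    eLpNorm (fun w : α × β => f w.1 * g w.2) 2 (μ.prod ν) = eLpNorm f 2 μ * eLpNorm g 2 ν := by
  refine (ENNReal.pow_right_strictMono two_ne_zero).injective ?_
  simp only [mul_pow, sq_eLpNorm_two, enorm_eq_self]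
  exact lintegral_prod_mul (hf.pow_const 2) (hg.pow_const 2)

lemma lintegral_mul_prod_mul_le_eLpNorm_two {k : α × β → ℝ≥0∞} {f : α → ℝ≥0∞} {g : β → ℝ≥0∞}
    (hk : AEMeasurable k (μ.prod ν)) (hf : AEMeasurable f μ) (hg : AEMeasurable g ν) :
    ∫⁻ w, k w * (f w.1 * g w.2) ∂(μ.prod ν)
      ≤ eLpNorm k 2 (μ.prod ν) * (eLpNorm f 2 μ * eLpNorm g 2 ν) := by
  rw [← eLpNorm_two_prod_mul hf hg]
  exact lintegral_mul_le_eLpNorm_two_mul_eLpNorm_two hk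
    ((hf.comp_quasiMeasurePreserving Measure.quasiMeasurePreserving_fst).mul
      (hg.comp_quasiMeasurePreserving Measure.quasiMeasurePreserving_snd))

end

lemma LipschitzWith.eLpNorm_comp_le {α E F : Type*} [MeasurableSpace α] {μ : Measure α}
    [SeminormedAddGroup E] [SeminormedAddGroup F] {φ : E → F} {L : NNReal}
    (hφ : LipschitzWith L φ) (hφ0 : φ 0 = 0) (f : α → E) (p : ℝ≥0∞) :
    eLpNorm (fun x => φ (f x)) p μ ≤ L * eLpNorm f p μ :=
  eLpNorm_le_mul_eLpNorm_of_ae_le_mul' (ae_of_all _ fun x => by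
    rw [enorm_eq_nnnorm, enorm_eq_nnnorm]; exact_mod_cast hφ.nnorm_le_mul hφ0 (f x)) p

lemma measurePreserving_prodProdProdComm_s7 {α β γ δ : Type*} [MeasurableSpace α]
    [MeasurableSpace β] [MeasurableSpace γ] [MeasurableSpace δ] (μa : Measure α)
    (μb : Measure β) (μc : Measure γ) (μd : Measure δ) [SFinite μa] [SFinite μb] [SFinite μc]
    [SFinite μd] :
    MeasurePreserving (fun q : (α × β) × γ × δ => ((q.1.1, q.2.1), (q.1.2, q.2.2)))
      ((μa.prod μb).prod (μc.prod μd)) ((μa.prod μc).prod (μb.prod μd)) := by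
  have swap_inner : MeasurePreserving (fun p : β × γ × δ => (p.2.1, (p.1, p.2.2)))
      (μb.prod (μc.prod μd)) (μc.prod (μb.prod μd)) :=
    (measurePreserving_prodAssoc μc μb μd).comp
      ((Measure.measurePreserving_swap.prod (MeasurePreserving.id μd)).comp
        ((measurePreserving_prodAssoc μb μc μd).symm _))
  exact ((measurePreserving_prodAssoc μa μc (μb.prod μd)).symm _).comp
    (((MeasurePreserving.id μa).prod swap_inner).comp
      (measurePreserving_prodAssoc μa μb (μc.prod μd)))

noncomputable def partialPairing {α β T : Type*} [MeasurableSpace T] (ν : Measure T)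
    (a : α × T → ℝ≥0∞) (g : β × T → ℝ≥0∞) (p : α × β) : ℝ≥0∞ :=
  ∫⁻ t, a (p.1, t) * g (p.2, t) ∂ν

section
variable {α β T : Type*} [MeasurableSpace α] [MeasurableSpace β] [MeasurableSpace T]
  {μ : Measure α} {μ' : Measure β} {ν : Measure T} [SFinite ν]
  {a : α × T → ℝ≥0∞} {g : β × T → ℝ≥0∞}

lemma measurable_partialPairing (ha : Measurable a) (hg : Measurable g) :
    Measurable (partialPairing ν a g) := by
  unfold partialPairing
  fun_prop

lemma eLpNorm_partialPairing_le [SFinite μ'] (ha : Measurable a) (hg : Measurable g) :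
    eLpNorm (partialPairing ν a g) 2 (μ.prod μ')
      ≤ eLpNorm a 2 (μ.prod ν) * eLpNorm g 2 (μ'.prod ν) := by
  rw [← ENNReal.pow_le_pow_left_iff two_ne_zero, mul_pow]
  simp only [sq_eLpNorm_two, enorm_eq_self]
  have slice_le (p : α × β) : partialPairing ν a g p ^ 2
      ≤ (∫⁻ t, a (p.1, t) ^ 2 ∂ν) * ∫⁻ t, g (p.2, t) ^ 2 ∂ν := by
    calc partialPairing ν a g p ^ 2
        ≤ (eLpNorm (fun t => a (p.1, t)) 2 ν * eLpNorm (fun t => g (p.2, t)) 2 ν) ^ 2 :=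
          pow_le_pow_left' (lintegral_mul_le_eLpNorm_two_mul_eLpNorm_two
            (ha.comp measurable_prodMk_left).aemeasurable
            (hg.comp measurable_prodMk_left).aemeasurable) 2
      _ = _ := by simp only [mul_pow, sq_eLpNorm_two, enorm_eq_self]
  calc ∫⁻ p, partialPairing ν a g p ^ 2 ∂(μ.prod μ')
      ≤ ∫⁻ p, (∫⁻ t, a (p.1, t) ^ 2 ∂ν) * ∫⁻ t, g (p.2, t) ^ 2 ∂ν ∂(μ.prod μ') :=
        lintegral_mono slice_le
    _ = (∫⁻ x, ∫⁻ t, a (x, t) ^ 2 ∂ν ∂μ) * ∫⁻ y, ∫⁻ t, g (y, t) ^ 2 ∂ν ∂μ' :=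
        lintegral_prod_mul (ha.pow_const 2).lintegral_prod_right'.aemeasurable
          (hg.pow_const 2).lintegral_prod_right'.aemeasurable
    _ = _ := by rw [lintegral_prod _ (by fun_prop), lintegral_prod _ (by fun_prop)]

end

-- The `ℝ≥0∞` counterpart of `B`, in its coordinates `z = ((x, y), (t₁, t₂))`, `u = (u₁, u₂)`.
noncomputable def covPairing {Ω T : Type*} [MeasurableSpace Ω] [MeasurableSpace T]
    (μ : Measure Ω) (ν : Measure T) (a g : Ω × T → ℝ≥0∞) (k : (Ω × Ω) × Ω × Ω → ℝ≥0∞) :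
    ℝ≥0∞ :=
  ∫⁻ z, a (z.1.1, z.2.1) *
      (∫⁻ u, g (u.2, z.2.2) * k ((z.1.1, u.1), (z.1.2, u.2)) * g (u.1, z.2.1) ∂(μ.prod μ)) *
      a (z.1.2, z.2.2) ∂((μ.prod μ).prod (ν.prod ν))

section
variable {Ω T : Type*} [MeasurableSpace Ω] [MeasurableSpace T] {μ : Measure Ω} {ν : Measure T}

lemma enorm_integral_le_covPairing (G A : Ω × T → ℝ) (K : Ω → Ω → Ω → Ω → ℝ) :
    ‖∫ z, A (z.1.1, z.2.1) *
        (∫ u, G (u.2, z.2.2) * K z.1.1 u.1 z.1.2 u.2 * G (u.1, z.2.1) ∂(μ.prod μ)) *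
        A (z.1.2, z.2.2) ∂((μ.prod μ).prod (ν.prod ν))‖ₑ
      ≤ covPairing μ ν (‖A ·‖ₑ) (‖G ·‖ₑ) (fun q => ‖K q.1.1 q.1.2 q.2.1 q.2.2‖ₑ) := by
  refine (enorm_integral_le_lintegral_enorm _).trans (lintegral_mono fun z => ?_)
  simp only [enorm_mul]
  gcongr
  exact (enorm_integral_le_lintegral_enorm _).trans_eq (by simp only [enorm_mul])

variable [SFinite μ] [SFinite ν]

-- Sections of an a.e.-defined function are determined only for a.e. base point, which is why
-- measurable representatives have to be substituted fibre by fibre.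
lemma covPairing_congr_ae {a a' g g' : Ω × T → ℝ≥0∞} {k k' : (Ω × Ω) × Ω × Ω → ℝ≥0∞}
    (ha : a =ᵐ[μ.prod ν] a') (hg : g =ᵐ[μ.prod ν] g')
    (hk : k =ᵐ[(μ.prod μ).prod (μ.prod μ)] k') :
    covPairing μ ν a g k = covPairing μ ν a' g' k' := by
  have hinter := (measurePreserving_prodProdProdComm_s7 μ μ ν ν).quasiMeasurePreserving
  have hg_slices : ∀ᵐ t ∂ν, ∀ᵐ x ∂μ, g (x, t) = g' (x, t) :=
    Measure.ae_ae_of_ae_prod (Measure.measurePreserving_swap.quasiMeasurePreserving.ae hg)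
  have hk_slices : ∀ᵐ xy ∂(μ.prod μ), ∀ᵐ u ∂(μ.prod μ),
      k ((xy.1, u.1), (xy.2, u.2)) = k' ((xy.1, u.1), (xy.2, u.2)) :=
    Measure.ae_ae_of_ae_prod
      ((measurePreserving_prodProdProdComm_s7 μ μ μ μ).quasiMeasurePreserving.ae hk)
  refine lintegral_congr_ae ?_
  filter_upwards [(Measure.quasiMeasurePreserving_fst.comp hinter).ae ha,
    (Measure.quasiMeasurePreserving_snd.comp hinter).ae ha,
    (Measure.quasiMeasurePreserving_fst.comp Measure.quasiMeasurePreserving_snd).ae hg_slices,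
    (Measure.quasiMeasurePreserving_snd.comp Measure.quasiMeasurePreserving_snd).ae hg_slices,
    Measure.quasiMeasurePreserving_fst.ae hk_slices] with z hax hay hgt₁ hgt₂ hkz
  dsimp only [Function.comp_apply] at hax hay hgt₁ hgt₂
  rw [hax, hay, lintegral_congr_ae ?_]
  filter_upwards [Measure.quasiMeasurePreserving_fst.ae hgt₁,
    Measure.quasiMeasurePreserving_snd.ae hgt₂, hkz] with u hgu₁ hgu₂ hku
  rw [hgu₁, hgu₂, hku]

lemma covPairing_eq_lintegral_partialPairing {a g : Ω × T → ℝ≥0∞}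
    {k : (Ω × Ω) × Ω × Ω → ℝ≥0∞} (ha : Measurable a) (hg : Measurable g) (hk : Measurable k) :
    covPairing μ ν a g k = ∫⁻ w, k w * (partialPairing ν a g w.1 * partialPairing ν a g w.2)
      ∂((μ.prod μ).prod (μ.prod μ)) := by
  have hF := measurable_partialPairing (ν := ν) ha hg
  calc covPairing μ ν a g k
      = ∫⁻ xy, ∫⁻ ts, ∫⁻ u, a (xy.1, ts.1) *
          (g (u.2, ts.2) * k ((xy.1, u.1), (xy.2, u.2)) * g (u.1, ts.1)) *
          a (xy.2, ts.2) ∂(μ.prod μ) ∂(ν.prod ν) ∂(μ.prod μ) := by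
        rw [covPairing, lintegral_prod _ (by fun_prop)]
        refine lintegral_congr fun xy => lintegral_congr fun ts => ?_
        rw [← lintegral_const_mul _ (by fun_prop), ← lintegral_mul_const _ (by fun_prop)]
    _ = ∫⁻ xy, ∫⁻ u, ∫⁻ ts, a (xy.1, ts.1) *
          (g (u.2, ts.2) * k ((xy.1, u.1), (xy.2, u.2)) * g (u.1, ts.1)) *
          a (xy.2, ts.2) ∂(ν.prod ν) ∂(μ.prod μ) ∂(μ.prod μ) :=
        lintegral_congr fun xy => lintegral_lintegral_swap (by fun_prop)
    _ = ∫⁻ xy, ∫⁻ u, k ((xy.1, u.1), (xy.2, u.2)) *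
          (partialPairing ν a g (xy.1, u.1) * partialPairing ν a g (xy.2, u.2))
          ∂(μ.prod μ) ∂(μ.prod μ) := by
        refine lintegral_congr fun xy => lintegral_congr fun u => ?_
        rw [partialPairing, partialPairing, ← lintegral_prod_mul (by fun_prop) (by fun_prop),
          ← lintegral_const_mul _ (by fun_prop)]
        exact lintegral_congr fun ts => by ring
    _ = ∫⁻ q, k ((q.1.1, q.2.1), (q.1.2, q.2.2)) *
          (partialPairing ν a g (q.1.1, q.2.1) * partialPairing ν a g (q.1.2, q.2.2))
          ∂((μ.prod μ).prod (μ.prod μ)) := Eq.symm <| lintegral_prod _ (by fun_prop)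
    _ = _ := (measurePreserving_prodProdProdComm_s7 μ μ μ μ).lintegral_comp
          (f := fun w => k w * (partialPairing ν a g w.1 * partialPairing ν a g w.2)) (by fun_prop)

lemma covPairing_le {a g : Ω × T → ℝ≥0∞} {k : (Ω × Ω) × Ω × Ω → ℝ≥0∞}
    (ha : AEMeasurable a (μ.prod ν)) (hg : AEMeasurable g (μ.prod ν))
    (hk : AEMeasurable k ((μ.prod μ).prod (μ.prod μ))) :
    covPairing μ ν a g k ≤ eLpNorm k 2 ((μ.prod μ).prod (μ.prod μ)) *
      (eLpNorm a 2 (μ.prod ν) * eLpNorm g 2 (μ.prod ν)) ^ 2 := by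
  rw [covPairing_congr_ae ha.ae_eq_mk hg.ae_eq_mk hk.ae_eq_mk,
    covPairing_eq_lintegral_partialPairing ha.measurable_mk hg.measurable_mk hk.measurable_mk,
    eLpNorm_congr_ae ha.ae_eq_mk, eLpNorm_congr_ae hg.ae_eq_mk, eLpNorm_congr_ae hk.ae_eq_mk,
    sq]
  have hF := (measurable_partialPairing (ν := ν) ha.measurable_mk hg.measurable_mk).aemeasurable
    (μ := μ.prod μ)
  calc _ ≤ eLpNorm (hk.mk k) 2 ((μ.prod μ).prod (μ.prod μ)) *
        (eLpNorm (partialPairing ν (ha.mk a) (hg.mk g)) 2 (μ.prod μ) *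
          eLpNorm (partialPairing ν (ha.mk a) (hg.mk g)) 2 (μ.prod μ)) :=
        lintegral_mul_prod_mul_le_eLpNorm_two hk.measurable_mk.aemeasurable hF hF
    _ ≤ _ := by
        gcongr <;> exact eLpNorm_partialPairing_le ha.measurable_mk hg.measurable_mk

end

/-- The bilinear pairing `B(h̃,h̃) = ∫ h̃(x,t₁) C(x,y,t₁,t₂) h̃(y,t₂)` built from the
covariance kernel `C` satisfies `|B| ≤ L(φ)²‖K‖‖h‖²‖h̃‖²`. -/
theorem covariance_bilinear_bound
    {Ω : Type*} [MeasurableSpace Ω] (μ : Measure Ω) [SigmaFinite μ]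
    (φ : ℝ → ℝ) (L : NNReal) (hφ : LipschitzWith L φ) (hφ0 : φ 0 = 0)
    (K : Ω → Ω → Ω → Ω → ℝ)
    (hK : MemLp (fun q : (Ω × Ω) × Ω × Ω => K q.1.1 q.1.2 q.2.1 q.2.2) 2
      ((μ.prod μ).prod (μ.prod μ)))
    (h ht : Ω × ℝ → ℝ)
    (hh : MemLp h 2 (μ.prod (volume : Measure ℝ)))
    (hht : MemLp ht 2 (μ.prod (volume : Measure ℝ))) :
    |∫ z : (Ω × Ω) × ℝ × ℝ,
        ht (z.1.1, z.2.1) *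
          (∫ u : Ω × Ω, φ (h (u.2, z.2.2)) * K z.1.1 u.1 z.1.2 u.2 * φ (h (u.1, z.2.1))
            ∂(μ.prod μ)) *
          ht (z.1.2, z.2.2)
        ∂((μ.prod μ).prod ((volume : Measure ℝ).prod (volume : Measure ℝ)))|
      ≤ (L : ℝ) ^ 2 *
          (eLpNorm (fun q : (Ω × Ω) × Ω × Ω => K q.1.1 q.1.2 q.2.1 q.2.2) 2
              ((μ.prod μ).prod (μ.prod μ))).toReal *
          ((eLpNorm h 2 (μ.prod (volume : Measure ℝ))).toReal) ^ 2 *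
          ((eLpNorm ht 2 (μ.prod (volume : Measure ℝ))).toReal) ^ 2 := by
  have hφh := hφ.eLpNorm_comp_le hφ0 h 2 (μ := μ.prod volume)
  have hφh_meas := hφ.continuous.comp_aestronglyMeasurable hh.aestronglyMeasurable
  have hpairing := covPairing_le (μ := μ) (ν := volume) hht.aemeasurable.enorm
    hφh_meas.aemeasurable.enorm hK.aemeasurable.enorm
  simp only [eLpNorm_enorm] at hpairing
  have hfinite : eLpNorm (fun q : (Ω × Ω) × Ω × Ω => K q.1.1 q.1.2 q.2.1 q.2.2) 2
      ((μ.prod μ).prod (μ.prod μ)) *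
      (eLpNorm ht 2 (μ.prod volume) * (L * eLpNorm h 2 (μ.prod volume))) ^ 2 ≠ ∞ :=
    mul_ne_top hK.eLpNorm_ne_top
      (pow_ne_top (mul_ne_top hht.eLpNorm_ne_top (mul_ne_top coe_ne_top hh.eLpNorm_ne_top)))
  rw [← Real.norm_eq_abs, ← toReal_enorm]
  refine (toReal_mono hfinite ((enorm_integral_le_covPairing (fun p => φ (h p)) ht K).trans
    (hpairing.trans (by gcongr)))).trans_eq ?_
  simp only [toReal_mul, toReal_pow, coe_toReal]
  ring
end
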